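/- arXiv:1905.00150 — 2 statements merged into one kernel-verified Lean document; each statement's English description precedes it below -/
import Mathlib

section
/- Let n > 2 be an integer and let q ∈ B_n with wt(q) = 1. Then every balanced function f ∈ B_n is q-nearly bent; indeed |W_q(f)(A)| = 2 = ρ_q for every A ∈ GL_n. -/
open Finset Matrix

/-- Hamming weight of a Boolean function on `𝔽₂ⁿ`. -/
def wt {n : ℕ} (f : (Fin n → ZMod 2) → ZMod 2) : ℕ :=
  (Finset.univ.filter fun a => f a = 1).card

/-- Imbalance `I_f = Σ_a (-1)^{f(a)}`. -/
def imb {n : ℕ} (f : (Fin n → ZMod 2) → ZMod 2) : ℤ :=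
  ∑ a : Fin n → ZMod 2, (-1 : ℤ) ^ (f a).val

/-- q-transform coefficient `W_q(f)(A) = Σ_a (-1)^{f(a)+q(aA)}` (for `A` a matrix;
invertibility is imposed at use sites via `GL`). -/
def Wq {n : ℕ} (q f : (Fin n → ZMod 2) → ZMod 2)
    (A : Matrix (Fin n) (Fin n) (ZMod 2)) : ℤ :=
  ∑ a : Fin n → ZMod 2, (-1 : ℤ) ^ (f a + q (Matrix.vecMul a A)).val

/-- `ρ_q = ⌈ ((2^{2n} - I_q²)/(2^n - 1))^{1/2} ⌉`. -/
noncomputable def rho {n : ℕ} (q : (Fin n → ZMod 2) → ZMod 2) : ℤ :=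
  ⌈Real.sqrt (((2 : ℝ) ^ (2 * n) - (imb q : ℝ) ^ 2) / ((2 : ℝ) ^ n - 1))⌉

/-- `f` is affine: `f(x) = v·x + c`. -/
def IsAffine {n : ℕ} (f : (Fin n → ZMod 2) → ZMod 2) : Prop :=
  ∃ (v : Fin n → ZMod 2) (c : ZMod 2), ∀ x, f x = (∑ i, v i * x i) + c

lemma imb_eq_aux {n : ℕ} (f : (Fin n → ZMod 2) → ZMod 2) :
    imb f = 2 ^ n - 2 * wt f := by
  unfold imb wt
  have h : ∀ x : ZMod 2, (-1:ℤ)^x.val = 1 - 2 * (if x = 1 then 1 else 0) := by decide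
  simp_rw [h]
  rw [Finset.sum_sub_distrib, Finset.sum_const, ← Finset.mul_sum, Finset.sum_boole]
  have : Fintype.card (Fin n → ZMod 2) = 2 ^ n := by simp
  simp [this]

/-- If `wt q = 1` then every balanced `f` is `q`-nearly bent; in fact
`|W_q(f)(A)| = 2 = ρ_q` for every `A ∈ GL_n`. -/
theorem weight_one_nearly_bent (n : ℕ) (hn : 2 < n)
    (q : (Fin n → ZMod 2) → ZMod 2) (hq : wt q = 1)
    (f : (Fin n → ZMod 2) → ZMod 2) (hbal : wt f = 2 ^ (n - 1)) :
    rho q = 2 ∧ ∀ A : GL (Fin n) (ZMod 2), |Wq q f A.val| = 2 := by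
  have himbq : imb q = 2 ^ n - 2 := by rw [imb_eq_aux, hq]; push_cast; ring
  have himbf : imb f = 0 := by
    rw [imb_eq_aux, hbal]
    have h2 : (2:ℤ) * 2 ^ (n - 1) = 2 ^ n := by
      rw [← pow_succ']
      congr 1
      omega
    push_cast
    linarith [h2]
  constructor
  · -- rho q = 2
    unfold rho
    rw [himbq]
    have h1 : (1:ℝ) < 2 ^ n := by
      have : (2:ℝ) ^ 0 < 2 ^ n := by
        apply pow_lt_pow_right₀ one_lt_two
        omega
      simpa using this
    have hden : (2:ℝ) ^ n - 1 ≠ 0 := sub_ne_zero.mpr (ne_of_gt h1)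
    have harg : ((2:ℝ) ^ (2 * n) - (((2:ℤ)^n - 2 : ℤ) : ℝ) ^ 2) / ((2:ℝ) ^ n - 1) = 4 := by
      rw [div_eq_iff hden]
      push_cast
      rw [pow_mul' (2:ℝ) 2 n]
      ring
    rw [harg, show (4:ℝ) = 2 ^ 2 by norm_num, Real.sqrt_sq (by norm_num)]
    rw [show (2:ℝ) = ((2:ℤ):ℝ) by norm_num, Int.ceil_intCast]
  · intro A
    obtain ⟨b0, hbset⟩ := Finset.card_eq_one.mp hq
    have hqb : ∀ x, q x = 1 ↔ x = b0 := by
      intro x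
      constructor
      · intro hx
        have : x ∈ Finset.univ.filter fun a => q a = 1 := by simp [hx]
        rw [hbset] at this
        simpa using this
      · intro hx
        rw [hx]
        have : b0 ∈ Finset.univ.filter fun a => q a = 1 := by
          rw [hbset]; simp
        simpa using this
    set a0 : Fin n → ZMod 2 := vecMul b0 (↑A⁻¹ : Matrix (Fin n) (Fin n) (ZMod 2)) with ha0
    have hA : vecMul a0 A.val = b0 := by
      rw [ha0, vecMul_vecMul]
      have : (↑A⁻¹ : Matrix (Fin n) (Fin n) (ZMod 2)) * A.val = 1 := A.inv_mul
      rw [this, vecMul_one]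
    have hinj : ∀ a, vecMul a A.val = b0 → a = a0 := by
      intro a ha
      have h1 : vecMul (vecMul a A.val) (↑A⁻¹ : Matrix (Fin n) (Fin n) (ZMod 2)) = a := by
        rw [vecMul_vecMul, A.mul_inv, vecMul_one]
      rw [ha] at h1
      rw [← h1, ha0]
    have key : Wq q f A.val = imb f - 2 * (-1:ℤ) ^ (f a0).val := by
      unfold Wq imb
      have hterm : ∀ a : Fin n → ZMod 2,
          (-1:ℤ) ^ (f a + q (vecMul a A.val)).val =
          (-1:ℤ) ^ (f a).val - 2 * (if a = a0 then (-1:ℤ) ^ (f a).val else 0) := by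
        intro a
        by_cases h : a = a0
        · subst h
          rw [hA, (hqb b0).mpr rfl]
          simp only [if_pos rfl]
          have hx : ∀ x : ZMod 2, (-1:ℤ) ^ (x + 1).val = (-1:ℤ)^x.val - 2 * (-1:ℤ)^x.val := by
            decide
          exact hx (f a0)
        · have hne : vecMul a A.val ≠ b0 := fun hc => h (hinj a hc)
          have hz : ∀ x : ZMod 2, x ≠ 1 → x = 0 := by decide
          have hq0 : q (vecMul a A.val) = 0 :=
            hz _ (fun hc => hne ((hqb _).mp hc))
          rw [hq0, add_zero, if_neg h]
          ring
      simp_rw [hterm]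
      rw [Finset.sum_sub_distrib, ← Finset.mul_sum,
        Finset.sum_ite_eq' Finset.univ a0 (fun a => (-1:ℤ) ^ (f a).val)]
      simp
    rw [key, himbf]
    have hv : (f a0).val = 0 ∨ (f a0).val = 1 := by
      have := ZMod.val_lt (f a0)
      omega
    rcases hv with h | h <;> rw [h] <;> norm_num
end

section
/- Let n > 2 be an even integer and let q ∈ B_n be balanced (so wt(q) = 2^(n-1)). Then no non-affine balanced q-nearly bent function exists in B_n. -/
/-!
Write `W(A) = Σ_a (-1)^{f(a)} (-1)^{q(aA)}`. Expanding the square,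
`Σ_{A ∈ GL_n} W(A)² = Σ_{a,b} (-1)^{f(a)+f(b)} S(a,b)` with `S(a,b) = Σ_A (-1)^{q(aA)+q(bA)}`.
`GL_n` acts transitively on nonzero vectors and on pairs of distinct nonzero vectors (over `𝔽₂`
these are exactly the linearly independent pairs), so averaging over orbits shows, for balanced
`q`, that `S(a,a) = |GL_n|` and `S(a,b) = -|GL_n| / (2^n - 1)` for `a ≠ b`. For balanced `f` this
gives `Σ_A W(A)² = |GL_n| · 2^{2n} / (2^n - 1)`: `ρ_q` is the ceiling of the root mean square of
`W`, which is `2^{n/2} + 1` for even `n`. But every `W(A)` is even, so `|W(A)| ≤ ρ_q` forces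
`W(A)² ≤ 2^n`, strictly below the mean square.
-/

open Finset Matrix

open MulAction

theorem MulAction.card_nsmul_sum_smul_eq {G X R : Type*} [Group G] [Fintype G] [MulAction G X]
    [AddCommMonoid R] {x : X} {O : Finset X} (hO : ∀ y, y ∈ O ↔ y ∈ orbit G x) (φ : X → R) :
    #O • ∑ g : G, φ (g • x) = Fintype.card G • ∑ y ∈ O, φ y := by
  have hsum_orbit : ∀ y ∈ O, ∑ g : G, φ (g • y) = ∑ g : G, φ (g • x) := by
    intro y hy
    obtain ⟨h, rfl⟩ := (hO y).1 hy
    simp_rw [smul_smul]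
    exact Fintype.sum_equiv (Equiv.mulRight h) _ _ fun _ => rfl
  have hsum_smul : ∀ g : G, ∑ y ∈ O, φ (g • y) = ∑ y ∈ O, φ y := fun g =>
    Finset.sum_equiv (toPerm g) (fun y => by
      rw [hO, hO, toPerm_apply, ← orbit_eq_iff, ← orbit_eq_iff, orbit_smul]) fun _ _ => rfl
  calc #O • ∑ g : G, φ (g • x) = ∑ y ∈ O, ∑ g : G, φ (g • y) := by
        rw [← Finset.sum_const]
        exact (Finset.sum_congr rfl hsum_orbit).symm
    _ = ∑ g : G, ∑ y ∈ O, φ (g • y) := Finset.sum_comm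
    _ = Fintype.card G • ∑ y ∈ O, φ y := by simp [hsum_smul]

theorem Finset.sum_offDiag_mul {α R : Type*} [DecidableEq α] [CommRing R] (s : Finset α)
    (ψ : α → R) : ∑ p ∈ s.offDiag, ψ p.1 * ψ p.2 = (∑ x ∈ s, ψ x) ^ 2 - ∑ x ∈ s, ψ x ^ 2 := by
  rw [sq, Finset.sum_mul_sum, ← Finset.sum_product', ← diag_union_offDiag,
    sum_union (disjoint_diag_offDiag _), sum_diag]
  simp [sq]

theorem Int.abs_le_of_even_of_abs_le_add_one {w k : ℤ} (hw : Even w) (hk : Even k)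
    (h : |w| ≤ k + 1) : |w| ≤ k := by
  obtain ⟨r, rfl⟩ := hw
  obtain ⟨s, rfl⟩ := hk
  rw [abs_le] at *
  omega

theorem LinearIndependent.exists_linearEquiv_apply_eq {K V ι : Type*} [Field K]
    [AddCommGroup V] [Module K V] [Finite ι] {v w : ι → V} (hv : LinearIndependent K v)
    (hw : LinearIndependent K w) : ∃ g : V ≃ₗ[K] V, ∀ i, g (v i) = w i := by
  have : FiniteDimensional K (Submodule.span K (Set.range v)) :=
    FiniteDimensional.span_of_finite K (Set.finite_range _)
  obtain ⟨g, hg⟩ := Submodule.exists_linearEquiv_restrict_eq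
    (hv.linearCombinationEquiv.symm ≪≫ₗ hw.linearCombinationEquiv)
  refine ⟨g, fun i => ?_⟩
  have hrepr : hv.linearCombinationEquiv.symm ⟨v i, Submodule.subset_span ⟨i, rfl⟩⟩
      = Finsupp.single i 1 := hv.repr_eq_single i _ rfl
  have := hg ⟨v i, Submodule.subset_span ⟨i, rfl⟩⟩
  rw [LinearEquiv.trans_apply, hrepr] at this
  simpa using this.symm

theorem LinearIndependent.pair_iff_zmod_two {V : Type*} [AddCommGroup V] [Module (ZMod 2) V]
    {x y : V} : LinearIndependent (ZMod 2) ![x, y] ↔ x ≠ 0 ∧ y ≠ 0 ∧ x ≠ y := by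
  by_cases hx : x = 0
  · subst hx
    simpa using fun h : LinearIndependent (ZMod 2) ![0, y] => h.ne_zero 0
  rw [LinearIndependent.pair_iff' hx]
  refine ⟨fun h => ⟨hx, fun e => h 0 (by simp [e]), fun e => h 1 (by simp [e])⟩, ?_⟩
  rintro ⟨-, hy, hxy⟩ c
  obtain rfl | rfl : c = 0 ∨ c = 1 := by revert c; decide
  · simpa [eq_comm] using hy
  · simpa using hxy

namespace Matrix.GeneralLinearGroup

variable {n R : Type*} [Fintype n] [DecidableEq n]

theorem sum_transpose [CommSemiring R] [Fintype (GL n R)] {M : Type*} [AddCommMonoid M]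
    (φ : Matrix n n R → M) : ∑ A : GL n R, φ A.valᵀ = ∑ A : GL n R, φ A.val :=
  Fintype.sum_equiv ((Units.mapEquiv (transposeRingEquiv n R).toMulEquiv).trans
    Units.opEquiv |>.toEquiv.trans MulOpposite.opEquiv.symm) _ _ fun _ => rfl

theorem exists_smul_eq_linearEquiv_apply [CommRing R] (g : (n → R) ≃ₗ[R] (n → R)) :
    ∃ A : GL n R, ∀ v, A • v = g v := by
  have hunit : IsUnit (LinearMap.toMatrix' g.toLinearMap) :=
    mulVec_surjective_iff_isUnit.1 fun w => ⟨g.symm w, by simp⟩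
  exact ⟨hunit.unit, LinearMap.toMatrix'_mulVec _⟩

theorem exists_smul_eq_of_linearIndependent [Field R] {ι : Type*} [Finite ι]
    {v w : ι → n → R} (hv : LinearIndependent R v) (hw : LinearIndependent R w) :
    ∃ A : GL n R, ∀ i, A • v i = w i := by
  obtain ⟨g, hg⟩ := hv.exists_linearEquiv_apply_eq hw
  obtain ⟨A, hA⟩ := exists_smul_eq_linearEquiv_apply g
  exact ⟨A, fun i => (hA _).trans (hg i)⟩

theorem mem_orbit_iff_ne_zero [Field R] {a : n → R} (ha : a ≠ 0) (x : n → R) :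
    x ∈ orbit (GL n R) a ↔ x ≠ 0 := by
  refine ⟨?_, fun hx => ?_⟩
  · rintro ⟨A, rfl⟩
    exact (smul_ne_zero_iff_ne A).2 ha
  · obtain ⟨A, hA⟩ := exists_smul_eq_of_linearIndependent
      (linearIndependent_unique_iff.2 ha : LinearIndependent R fun _ : Unit => a)
      (linearIndependent_unique_iff.2 hx : LinearIndependent R fun _ : Unit => x)
    exact ⟨A, hA ()⟩

theorem mem_orbit_pair_iff [Field R] {a b : n → R} (hab : LinearIndependent R ![a, b])
    (p : (n → R) × (n → R)) :
    p ∈ orbit (GL n R) (a, b) ↔ LinearIndependent R ![p.1, p.2] := by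
  refine ⟨?_, fun hp => ?_⟩
  · rintro ⟨A, rfl⟩
    have hcomp : ![A • a, A • b] = DistribMulAction.toLinearEquiv R (n → R) A ∘ ![a, b] := by
      ext i : 1
      fin_cases i <;> rfl
    change LinearIndependent R ![A • a, A • b]
    rw [hcomp]
    exact hab.map' _ (LinearEquiv.ker _)
  · obtain ⟨A, hA⟩ := exists_smul_eq_of_linearIndependent hab hp
    exact ⟨A, Prod.ext (hA 0) (hA 1)⟩

end Matrix.GeneralLinearGroup

section BooleanFunction

open Matrix.GeneralLinearGroup

variable {n : ℕ} {q f : (Fin n → ZMod 2) → ZMod 2}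

def sgn (u : ZMod 2) : ℤ := (-1) ^ u.val

theorem sgn_add (u v : ZMod 2) : sgn (u + v) = sgn u * sgn v := by
  revert u v; decide

theorem sgn_mul_self (u : ZMod 2) : sgn u * sgn u = 1 := by
  revert u; decide

theorem imb_eq_two_pow_sub_two_mul_wt : imb f = 2 ^ n - 2 * wt f := by
  have hsgn : ∀ u : ZMod 2, (-1 : ℤ) ^ u.val = 1 - 2 * if u = 1 then 1 else 0 := by decide
  simp only [imb, wt, hsgn, sum_sub_distrib, ← mul_sum, sum_boole]
  simp

theorem imb_eq_zero_of_wt_eq (hn : n ≠ 0) (hf : wt f = 2 ^ (n - 1)) : imb f = 0 := by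
  obtain ⟨k, rfl⟩ := Nat.exists_eq_add_one_of_ne_zero hn
  rw [imb_eq_two_pow_sub_two_mul_wt, hf, Nat.add_sub_cancel]
  push_cast
  ring

theorem even_Wq (hn : n ≠ 0) (A : Matrix (Fin n) (Fin n) (ZMod 2)) : Even (Wq q f A) := by
  rw [show Wq q f A = imb fun a => f a + q (a ᵥ* A) from rfl, imb_eq_two_pow_sub_two_mul_wt]
  exact (even_two.pow_of_ne_zero hn).sub (even_two_mul _)

theorem card_univ_erase_zero : (#(univ.erase (0 : Fin n → ZMod 2)) : ℤ) = 2 ^ n - 1 := by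
  simp [card_erase_of_mem, Nat.cast_sub Nat.one_le_two_pow]

theorem sum_univ_erase_zero_sgn (hq : imb q = 0) :
    ∑ x ∈ univ.erase 0, sgn (q x) = -sgn (q 0) := by
  rw [sum_erase_eq_sub (mem_univ _)]
  change imb q - _ = _
  rw [hq, zero_sub]

def glCorrelation (q : (Fin n → ZMod 2) → ZMod 2) (a b : Fin n → ZMod 2) : ℤ :=
  ∑ A : GL (Fin n) (ZMod 2), sgn (q (A • a)) * sgn (q (A • b))

theorem glCorrelation_self (a : Fin n → ZMod 2) :
    glCorrelation q a a = Fintype.card (GL (Fin n) (ZMod 2)) := by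
  simp [glCorrelation, sgn_mul_self]

theorem glCorrelation_comm (a b : Fin n → ZMod 2) :
    glCorrelation q a b = glCorrelation q b a := by
  simp only [glCorrelation, mul_comm]

theorem glCorrelation_zero_left (hq : imb q = 0) {b : Fin n → ZMod 2} (hb : b ≠ 0) :
    (2 ^ n - 1) * glCorrelation q 0 b = -Fintype.card (GL (Fin n) (ZMod 2)) := by
  have havg := card_nsmul_sum_smul_eq (G := GL (Fin n) (ZMod 2)) (x := b) (O := univ.erase 0)
    (fun y => by simp [mem_orbit_iff_ne_zero hb]) fun x => sgn (q x)
  rw [nsmul_eq_mul, nsmul_eq_mul, card_univ_erase_zero, sum_univ_erase_zero_sgn hq] at havg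
  simp only [glCorrelation, smul_zero, ← mul_sum]
  linear_combination sgn (q 0) * havg -
    (Fintype.card (GL (Fin n) (ZMod 2)) : ℤ) * sgn_mul_self (q 0)

theorem glCorrelation_of_ne_zero (hq : imb q = 0) {a b : Fin n → ZMod 2} (ha : a ≠ 0)
    (hb : b ≠ 0) (hab : a ≠ b) :
    (2 ^ n - 1) * glCorrelation q a b = -Fintype.card (GL (Fin n) (ZMod 2)) := by
  have hO : ∀ p, p ∈ (univ.erase 0).offDiag ↔ p ∈ orbit (GL (Fin n) (ZMod 2)) (a, b) := by
    intro p
    rw [mem_orbit_pair_iff (LinearIndependent.pair_iff_zmod_two.2 ⟨ha, hb, hab⟩),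
      LinearIndependent.pair_iff_zmod_two]
    simp
  have hcard := sum_offDiag_mul (univ.erase (0 : Fin n → ZMod 2)) fun _ => (1 : ℤ)
  simp only [mul_one, one_pow, sum_const, nsmul_eq_mul, card_univ_erase_zero] at hcard
  have hcard_ne : (#(univ.erase (0 : Fin n → ZMod 2)).offDiag : ℤ) ≠ 0 :=
    Nat.cast_ne_zero.2 (card_ne_zero_of_mem ((hO _).2 (mem_orbit_self _)))
  have havg := card_nsmul_sum_smul_eq hO fun p => sgn (q p.1) * sgn (q p.2)
  rw [nsmul_eq_mul, nsmul_eq_mul, sum_offDiag_mul _ fun x => sgn (q x),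
    sum_univ_erase_zero_sgn hq] at havg
  simp only [sq, sgn_mul_self, neg_mul_neg, sum_const, card_univ_erase_zero, nsmul_eq_mul,
    mul_one] at havg
  change _ * glCorrelation q a b = _ at havg
  have key : (#(univ.erase (0 : Fin n → ZMod 2)).offDiag : ℤ) *
      ((2 ^ n - 1) * glCorrelation q a b + Fintype.card (GL (Fin n) (ZMod 2))) = 0 := by
    linear_combination (2 ^ n - 1 : ℤ) * havg +
      (Fintype.card (GL (Fin n) (ZMod 2)) : ℤ) * hcard
  linear_combination (mul_eq_zero.1 key).resolve_left hcard_ne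

theorem glCorrelation_of_ne (hq : imb q = 0) {a b : Fin n → ZMod 2} (hab : a ≠ b) :
    (2 ^ n - 1) * glCorrelation q a b = -Fintype.card (GL (Fin n) (ZMod 2)) := by
  obtain rfl | ha := eq_or_ne a 0
  · exact glCorrelation_zero_left hq hab.symm
  obtain rfl | hb := eq_or_ne b 0
  · rw [glCorrelation_comm]
    exact glCorrelation_zero_left hq ha
  exact glCorrelation_of_ne_zero hq ha hb hab

theorem sum_Wq_sq (hq : imb q = 0) (hf : imb f = 0) :
    (2 ^ n - 1) * ∑ A : GL (Fin n) (ZMod 2), Wq q f A.val ^ 2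
      = Fintype.card (GL (Fin n) (ZMod 2)) * (2 ^ n) ^ 2 := by
  set N : ℤ := (Fintype.card (GL (Fin n) (ZMod 2)) : ℤ)
  -- `Wq` lets `A` act on row vectors; after transposing, `A` acts by the library's `A • a = A *ᵥ a`.
  have hW : ∀ A : GL (Fin n) (ZMod 2), Wq q f A.valᵀ = ∑ a, sgn (f a) * sgn (q (A • a)) :=
    fun A => sum_congr rfl fun a _ => by rw [vecMul_transpose, ← sgn_add]; rfl
  have hexpand : ∑ A : GL (Fin n) (ZMod 2), Wq q f A.val ^ 2
      = ∑ a, ∑ b, sgn (f a) * sgn (f b) * glCorrelation q a b := by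
    rw [← sum_transpose fun M => Wq q f M ^ 2]
    simp_rw [hW, sq, sum_mul_sum, glCorrelation, mul_sum]
    rw [sum_comm]
    refine sum_congr rfl fun a _ => ?_
    rw [sum_comm]
    exact sum_congr rfl fun b _ => sum_congr rfl fun A _ => by ring
  have hcorr : ∀ a b, (2 ^ n - 1) * glCorrelation q a b
      = N * ((if a = b then 2 ^ n else 0) - 1) := by
    intro a b
    split_ifs with hab
    · rw [hab, glCorrelation_self]
      ring
    · rw [glCorrelation_of_ne hq hab]
      ring
  have himb : ∑ a, sgn (f a) = 0 := hf
  calc (2 ^ n - 1) * ∑ A : GL (Fin n) (ZMod 2), Wq q f A.val ^ 2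
      = ∑ a, ∑ b, sgn (f a) * sgn (f b) * ((2 ^ n - 1) * glCorrelation q a b) := by
        rw [hexpand, mul_sum]
        exact sum_congr rfl fun a _ => by rw [mul_sum]; exact sum_congr rfl fun b _ => by ring
    _ = N * 2 ^ n * ∑ a, sgn (f a) * sgn (f a) - N * (∑ a, sgn (f a)) ^ 2 := by
        simp only [hcorr, mul_sub, sum_sub_distrib, mul_ite, mul_zero, sum_ite_eq, mem_univ,
          if_true, mul_one, ← sum_mul, ← mul_sum]
        ring
    _ = N * (2 ^ n) ^ 2 := by
        simp only [sgn_mul_self, sum_const, card_univ, Fintype.card_fun, ZMod.card,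
          Fintype.card_fin, nsmul_eq_mul, mul_one, himb]
        push_cast
        ring

theorem rho_le_of_imb_eq_zero {m : ℕ} (hm : m ≠ 0) {q : (Fin (m + m) → ZMod 2) → ZMod 2}
    (hq : imb q = 0) : rho q ≤ 2 ^ m + 1 := by
  have ht : (2 : ℝ) ≤ 2 ^ m := le_self_pow₀ one_le_two hm
  have hpow : (2 : ℝ) ^ (m + m) = (2 ^ m) ^ 2 := by ring
  have hpow2 : (2 : ℝ) ^ (2 * (m + m)) = (2 ^ m) ^ 4 := by ring
  rw [rho, hq, Int.ceil_le, Real.sqrt_le_left (by positivity), div_le_iff₀ (by nlinarith)]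
  push_cast
  rw [hpow, hpow2]
  -- with `t = 2^m ≥ 2` this is `t⁴ ≤ (t + 1)² (t² - 1)`
  nlinarith [mul_nonneg (sub_nonneg.2 ht) (sub_nonneg.2 ht)]

end BooleanFunction

/-- For even `n > 2` and balanced `q`, there is no non-affine balanced
`q`-nearly bent function. -/
theorem no_nearly_bent_balanced_q (n : ℕ) (hn : 2 < n) (hne : Even n)
    (q : (Fin n → ZMod 2) → ZMod 2) (hq : wt q = 2 ^ (n - 1)) :
    ¬ ∃ f : (Fin n → ZMod 2) → ZMod 2,
        wt f = 2 ^ (n - 1) ∧ ¬ IsAffine f ∧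
        ∀ A : GL (Fin n) (ZMod 2), |Wq q f A.val| ≤ rho q := by
  rintro ⟨f, hf, -, hW⟩
  obtain ⟨m, rfl⟩ := hne
  have hm : m ≠ 0 := by omega
  have hn0 : m + m ≠ 0 := by omega
  have hqI := imb_eq_zero_of_wt_eq hn0 hq
  have hsq : ∀ A : GL (Fin (m + m)) (ZMod 2), Wq q f A.val ^ 2 ≤ 2 ^ (m + m) := fun A => by
    have hWA : |Wq q f A.val| ≤ 2 ^ m := Int.abs_le_of_even_of_abs_le_add_one (even_Wq hn0 _)
      (even_two.pow_of_ne_zero hm) ((hW A).trans (rho_le_of_imb_eq_zero hm hqI))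
    calc Wq q f A.val ^ 2 = |Wq q f A.val| ^ 2 := (sq_abs _).symm
      _ ≤ (2 ^ m) ^ 2 := by gcongr
      _ = 2 ^ (m + m) := by ring
  have hle : ∑ A : GL (Fin (m + m)) (ZMod 2), Wq q f A.val ^ 2
      ≤ Fintype.card (GL (Fin (m + m)) (ZMod 2)) * 2 ^ (m + m) := by
    refine (sum_le_sum fun A _ => hsq A).trans_eq ?_
    rw [sum_const, card_univ, nsmul_eq_mul]
  have hsum := sum_Wq_sq hqI (imb_eq_zero_of_wt_eq hn0 hf)
  have hcard : (0 : ℤ) < Fintype.card (GL (Fin (m + m)) (ZMod 2)) := by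
    exact_mod_cast Fintype.card_pos
  have h2 : (1 : ℤ) ≤ 2 ^ (m + m) := one_le_pow₀ one_le_two
  nlinarith [mul_le_mul_of_nonneg_left hle (sub_nonneg.2 h2)]
end
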